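/- arXiv:1711.08710 — 3 statements merged into one kernel-verified Lean document; each statement's English description precedes it below -/
import Mathlib

section
/- Let k be a natural number, let G be a finite simple graph, and let v be a vertex of G of degree at most k+1 such that every neighbor of v has degree at most k+1 in G. If the induced subgraph G − v is (0,k)-colorable, then G is (0,k)-colorable. -/
/-!
If every neighbour of `v` lies in the `k`-class, `v` joins the `0`-class. Otherwise `v` has a
neighbour in the `0`-class, so `v` can join the `k`-class with at most `k` neighbours there. The
only vertices that now have too many are the saturated neighbours of `v` (those with already `k`
neighbours in the `k`-class); since their degree is at most `k + 1`, all their neighbours lie in the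
`k`-class together with `v`. Moving a maximal independent set of saturated neighbours to the
`0`-class repairs the coloring: the moved vertices only see the `k`-class, and every remaining
saturated neighbour loses a neighbour in the `k`-class.
-/
/-- `D` is the k-class of a (0,k)-coloring of `G` restricted to the vertex set `S`
(i.e. a (0,k)-coloring of the subgraph of `G` induced by `S`). -/
def Coloring0KOn {V : Type*} (G : SimpleGraph V) (k : ℕ) (S D : Set V) : Prop :=
  D ⊆ S ∧ (∀ a ∈ S, ∀ b ∈ S, G.Adj a b → a ∈ D ∨ b ∈ D) ∧
    ∀ a ∈ D, {b | b ∈ D ∧ G.Adj a b}.ncard ≤ k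

/-- `D` is the k-class of a (0,k)-coloring of `G`. -/
def Coloring0K {V : Type*} (G : SimpleGraph V) (k : ℕ) (D : Set V) : Prop :=
  (∀ a b : V, G.Adj a b → a ∈ D ∨ b ∈ D) ∧
    ∀ a ∈ D, {b | b ∈ D ∧ G.Adj a b}.ncard ≤ k

namespace SimpleGraph

variable {V : Type*} {G : SimpleGraph V}

theorem ncard_neighborSet_eq_degree (a : V) [Fintype (G.neighborSet a)] :
    (G.neighborSet a).ncard = G.degree a := by
  rw [Set.ncard_eq_toFinset_card', ← card_neighborSet_eq_degree, Set.toFinset_card]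

theorem ncard_inter_neighborSet_lt_degree {a u : V} [Fintype (G.neighborSet a)] (s : Set V)
    (hau : G.Adj a u) (hus : u ∉ s) : (s ∩ G.neighborSet a).ncard < G.degree a := by
  rw [← ncard_neighborSet_eq_degree]
  exact Set.ncard_lt_ncard
    (Set.inter_subset_right.ssubset_of_not_subset fun h => hus (h hau).1) (Set.toFinite _)

theorem exists_adj_of_maximal_isIndepSet {S B : Set V}
    (hB : Maximal (fun B => B ⊆ S ∧ G.IsIndepSet B) B) {a : V} (haS : a ∈ S) (haB : a ∉ B) :
    ∃ b ∈ B, G.Adj a b := by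
  by_contra! hna
  have hins : insert a B ⊆ S ∧ G.IsIndepSet (insert a B) :=
    ⟨Set.insert_subset haS hB.prop.1, (Set.pairwise_insert_of_notMem haB).2
      ⟨hB.prop.2, fun b hb => ⟨hna b hb, fun h => hna b hb h.symm⟩⟩⟩
  exact haB (hB.le_of_ge hins (Set.subset_insert a B) (Set.mem_insert a B))

end SimpleGraph

section

open SimpleGraph

variable {V : Type*} {G : SimpleGraph V} {k : ℕ} {v : V} {D B : Set V}

def saturatedNeighbors (G : SimpleGraph V) (k : ℕ) (D : Set V) (v : V) : Set V :=
  {a ∈ D ∩ G.neighborSet v | k ≤ (D ∩ G.neighborSet a).ncard}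

theorem neighborSet_subset_insert_of_mem_saturatedNeighbors [Fintype V] [DecidableRel G.Adj]
    {a : V} (ha : a ∈ saturatedNeighbors G k D v) (hvD : v ∉ D) (hdeg : G.degree a ≤ k + 1) :
    G.neighborSet a ⊆ insert v D := by
  obtain ⟨⟨-, hva⟩, hk⟩ := ha
  intro b hab
  by_contra hb
  have hlt := ncard_inter_neighborSet_lt_degree (insert v D) hab hb
  rw [Set.insert_inter_of_mem (G.mem_neighborSet a v |>.2 hva.symm),
    Set.ncard_insert_of_notMem fun h => hvD h.1] at hlt
  omega

theorem Coloring0KOn.isVertexCover_insert_diff (hD : Coloring0KOn G k {v}ᶜ D)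
    (hB : G.IsIndepSet B) (hBN : ∀ b ∈ B, G.neighborSet b ⊆ insert v D) :
    G.IsVertexCover (insert v (D \ B)) := by
  have hcovered : ∀ a b, G.Adj a b → b ≠ v → a ∈ D →
      a ∈ insert v (D \ B) ∨ b ∈ insert v (D \ B) := by
    intro a b hab hb haD
    by_cases haB : a ∈ B
    · have hbD : b ∈ D := (hBN a haB hab).resolve_left hb
      exact Or.inr (Or.inr ⟨hbD, fun hbB => hB haB hbB (G.ne_of_adj hab) hab⟩)
    · exact Or.inl (Or.inr ⟨haD, haB⟩)
  intro a b hab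
  rcases eq_or_ne a v with rfl | ha
  · exact Or.inl (Set.mem_insert a _)
  rcases eq_or_ne b v with rfl | hb
  · exact Or.inr (Set.mem_insert b _)
  rcases hD.2.1 a ha b hb hab with haD | hbD
  · exact hcovered a b hab hb haD
  · exact (hcovered b a hab.symm ha hbD).symm

theorem ncard_insert_diff_inter_neighborSet_le [Finite V] {a : V}
    (hDa : (D ∩ G.neighborSet a).ncard ≤ k)
    (hlt : G.Adj a v → ((D ∩ G.neighborSet a) \ B).ncard < k) :
    (insert v (D \ B) ∩ G.neighborSet a).ncard ≤ k := by
  by_cases hadj : G.Adj a v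
  · have hsub :
        insert v (D \ B) ∩ G.neighborSet a ⊆ insert v ((D ∩ G.neighborSet a) \ B) := by
      rintro x ⟨rfl | ⟨hxD, hxB⟩, hax⟩
      · exact Set.mem_insert x _
      · exact Or.inr ⟨⟨hxD, hax⟩, hxB⟩
    calc _ ≤ (insert v ((D ∩ G.neighborSet a) \ B)).ncard := Set.ncard_le_ncard hsub
      _ ≤ ((D ∩ G.neighborSet a) \ B).ncard + 1 := Set.ncard_insert_le _ _
      _ ≤ k := hlt hadj
  · have hsub : insert v (D \ B) ∩ G.neighborSet a ⊆ D ∩ G.neighborSet a := by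
      rintro x ⟨rfl | ⟨hxD, -⟩, hax⟩
      · exact absurd hax hadj
      · exact ⟨hxD, hax⟩
    exact (Set.ncard_le_ncard hsub).trans hDa

theorem Coloring0KOn.coloring0K_of_neighborSet_subset (hD : Coloring0KOn G k {v}ᶜ D)
    (hN : G.neighborSet v ⊆ D) : Coloring0K G k D := by
  refine ⟨fun a b hab => ?_, hD.2.2⟩
  rcases eq_or_ne a v with rfl | ha
  · exact Or.inr (hN hab)
  rcases eq_or_ne b v with rfl | hb
  · exact Or.inl (hN hab.symm)
  exact hD.2.1 a ha b hb hab

theorem Coloring0KOn.coloring0K_insert_diff [Fintype V] [DecidableRel G.Adj] {u : V}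
    (hD : Coloring0KOn G k {v}ᶜ D) (hdeg : G.degree v ≤ k + 1)
    (hnbr : ∀ w, G.Adj v w → G.degree w ≤ k + 1) (hvu : G.Adj v u) (huD : u ∉ D)
    (hB : Maximal (fun B => B ⊆ saturatedNeighbors G k D v ∧ G.IsIndepSet B) B) :
    Coloring0K G k (insert v (D \ B)) := by
  have hvD : v ∉ D := fun h => hD.1 h rfl
  have hBsat := hB.prop.1
  refine ⟨hD.isVertexCover_insert_diff hB.prop.2 fun b hb =>
    neighborSet_subset_insert_of_mem_saturatedNeighbors (hBsat hb) hvD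
      (hnbr b (hBsat hb).1.2), ?_⟩
  rintro a (rfl | ⟨haD, haB⟩)
  · have hu : u ∉ insert a (D \ B) := by
      rintro (rfl | ⟨hu, -⟩)
      · exact G.ne_of_adj hvu rfl
      · exact huD hu
    exact Nat.le_of_lt_succ ((ncard_inter_neighborSet_lt_degree _ hvu hu).trans_le hdeg)
  refine ncard_insert_diff_inter_neighborSet_le (hD.2.2 a haD) fun hav => ?_
  by_cases hsat : a ∈ saturatedNeighbors G k D v
  · obtain ⟨b, hbB, hab⟩ := exists_adj_of_maximal_isIndepSet hB hsat haB
    have hlost : ¬D ∩ G.neighborSet a ⊆ (D ∩ G.neighborSet a) \ B :=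
      fun h => (h ⟨(hBsat hbB).1.1, hab⟩).2 hbB
    calc ((D ∩ G.neighborSet a) \ B).ncard < (D ∩ G.neighborSet a).ncard :=
          Set.ncard_lt_ncard (Set.sdiff_subset.ssubset_of_not_subset hlost)
      _ ≤ k := hD.2.2 a haD
  · have hunsat : (D ∩ G.neighborSet a).ncard < k :=
      lt_of_not_ge fun hk => hsat ⟨⟨haD, hav.symm⟩, hk⟩
    exact (Set.ncard_le_ncard Set.sdiff_subset).trans_lt hunsat

end

theorem no_big_neighbor_colorable_general_general {V : Type*} [Fintype V]
    (G : SimpleGraph V) [DecidableRel G.Adj] (k : ℕ) (v : V)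
    (hdeg : G.degree v ≤ k + 1)
    (hnbr : ∀ u : V, G.Adj v u → G.degree u ≤ k + 1)
    (h : ∃ D : Set V, Coloring0KOn G k ({v} : Set V)ᶜ D) :
    ∃ D : Set V, Coloring0K G k D := by
  obtain ⟨D, hD⟩ := h
  by_cases hN : G.neighborSet v ⊆ D
  · exact ⟨D, hD.coloring0K_of_neighborSet_subset hN⟩
  obtain ⟨u, hvu, huD⟩ := Set.not_subset.1 hN
  obtain ⟨B, -, hB⟩ := Finite.exists_le_maximal
    (p := fun B => B ⊆ saturatedNeighbors G k D v ∧ G.IsIndepSet B)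
    ⟨Set.empty_subset _, Set.pairwise_empty _⟩
  exact ⟨_, hD.coloring0K_insert_diff hdeg hnbr hvu huD hB⟩

/-- If `v` has degree at most `k+1` in `G`, every neighbor of `v` has degree at most
`k+1` in `G`, and the induced subgraph `G - v` is (0,k)-colorable, then `G` is
(0,k)-colorable. -/
theorem no_big_neighbor_colorable_general {V : Type*} [Fintype V] [DecidableEq V]
    (G : SimpleGraph V) [DecidableRel G.Adj] (k : ℕ) (v : V)
    (hdeg : G.degree v ≤ k + 1)
    (hnbr : ∀ u : V, G.Adj v u → G.degree u ≤ k + 1)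
    (h : ∃ D : Set V, Coloring0KOn G k ({v} : Set V)ᶜ D) :
    ∃ D : Set V, Coloring0K G k D :=
  no_big_neighbor_colorable_general_general G k v hdeg hnbr h
end

section
/- Let k ≥ 1 be an integer and let G be a finite simple graph that is not (0,k)-colorable. Let v be a vertex of G of degree 2 with neighbors u_1 and u_5, and suppose the induced subgraph G − v is (0,k)-colorable. Let H' be the graph obtained from G − v by adding three new vertices u_2, u_3, u_4 whose added edges form exactly the path u_1–u_2–u_3–u_4–u_5. Then H' is (0,k)-colorable, and in every (0,k)-coloring of H', the vertex u_3 lies in the k-class and exactly one of its two neighbors u_2, u_4 lies in the k-class. -/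
/-!
If a coloring of `G - v` had both neighbours of `v` in the k-class, or neither, it would extend
to `G` by putting `v` in the 0-class, resp. the k-class. If exactly one neighbour `x` is in the
k-class, `x` must already have `k` neighbours there, since otherwise `v` could join the k-class.
Hence the path `u₁ u₂ u₃ u₄ u₅` can be colored (if `u₁` is the k-class neighbour: `u₂` in the
0-class, `u₃` and `u₄` in the k-class). Conversely, a coloring of `H'` restricts to one of
`G - v`; its saturated neighbour of `v` keeps the new vertex next to it out of the k-class, which
forces the other two new vertices into it.
-/

section

variable {V : Type*} {G : SimpleGraph V} {k : ℕ} {v x y : V} {D : Set V}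

namespace Coloring0KOn

theorem coloring0K_of_neighborSet_subset_s12 (hD : Coloring0KOn G k {v}ᶜ D)
    (hN : G.neighborSet v ⊆ D) : Coloring0K G k D := by
  refine ⟨fun a b hab => ?_, hD.2.2⟩
  by_cases ha : a = v
  · subst ha
    exact .inr (hN hab)
  by_cases hb : b = v
  · subst hb
    exact .inl (hN hab.symm)
  exact hD.2.1 a ha b hb hab

theorem coloring0K_insert (hD : Coloring0KOn G k {v}ᶜ D)
    (hv : (D ∩ G.neighborSet v).ncard ≤ k)
    (hN : ∀ a ∈ D ∩ G.neighborSet v, (D ∩ G.neighborSet a).ncard < k) :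
    Coloring0K G k (insert v D) := by
  obtain ⟨-, hcover, hdeg⟩ := hD
  refine ⟨fun a b hab => ?_, ?_⟩
  · by_cases ha : a = v
    · exact .inl (ha ▸ Set.mem_insert v D)
    by_cases hb : b = v
    · exact .inr (hb ▸ Set.mem_insert v D)
    exact (hcover a ha b hb hab).imp (Set.mem_insert_of_mem v) (Set.mem_insert_of_mem v)
  · rintro a (rfl | ha)
    · show (insert a D ∩ G.neighborSet a).ncard ≤ k
      rwa [Set.insert_inter_of_notMem G.notMem_neighborSet_self]
    · show (insert v D ∩ G.neighborSet a).ncard ≤ k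
      by_cases hva : G.Adj v a
      · rw [Set.insert_inter_of_mem (show v ∈ G.neighborSet a from hva.symm)]
        exact (Set.ncard_insert_le v _).trans (hN a ⟨ha, hva⟩)
      · rw [Set.insert_inter_of_notMem (hva ·.symm)]
        exact hdeg a ha

theorem xor_mem_of_not_colorable (hnc : ¬ ∃ D, Coloring0K G k D)
    (hnv : G.neighborSet v = {x, y}) (hD : Coloring0KOn G k {v}ᶜ D) :
    Xor (x ∈ D) (y ∈ D) := by
  rw [xor_iff_not_iff]
  refine fun hxy => hnc ?_
  by_cases hx : x ∈ D
  · refine ⟨D, hD.coloring0K_of_neighborSet_subset_s12 ?_⟩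
    rw [hnv]
    exact Set.insert_subset hx (Set.singleton_subset_iff.2 (hxy.1 hx))
  · have hNv : D ∩ G.neighborSet v = ∅ := by
      rw [hnv]
      ext z
      simp only [Set.mem_inter_iff, Set.mem_insert_iff, Set.mem_singleton_iff,
        Set.mem_empty_iff_false, iff_false, not_and]
      rintro hz (rfl | rfl)
      exacts [hx hz, hx (hxy.2 hz)]
    refine ⟨_, hD.coloring0K_insert ?_ ?_⟩ <;> simp [hNv]

theorem le_ncard_of_not_colorable (hk : 1 ≤ k) (hnc : ¬ ∃ D, Coloring0K G k D)
    (hnv : G.neighborSet v = {x, y}) (hD : Coloring0KOn G k {v}ᶜ D)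
    (hx : x ∈ D) (hy : y ∉ D) : k ≤ (D ∩ G.neighborSet x).ncard := by
  have hNv : D ∩ G.neighborSet v = {x} := by
    rw [hnv]
    ext z
    simp only [Set.mem_inter_iff, Set.mem_insert_iff, Set.mem_singleton_iff]
    constructor
    · rintro ⟨hz, rfl | rfl⟩
      exacts [rfl, absurd hz hy]
    · rintro rfl
      exact ⟨hx, .inl rfl⟩
  by_contra! hlt
  refine hnc ⟨_, hD.coloring0K_insert ?_ ?_⟩
  · rwa [hNv, Set.ncard_singleton]
  · rw [hNv]
    rintro a rfl
    exact hlt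

end Coloring0KOn

section Gadget

variable {ι : Type*} {H : SimpleGraph ({z // z ≠ v} ⊕ ι)} {D' : Set ({z // z ≠ v} ⊕ ι)}

theorem ncard_image_val_preimage_inl_inter_neighborSet
    (hH : ∀ a b : {z // z ≠ v}, H.Adj (.inl a) (.inl b) ↔ G.Adj a.1 b.1)
    (D' : Set ({z // z ≠ v} ⊕ ι)) (a : {z // z ≠ v}) :
    (Subtype.val '' (Sum.inl ⁻¹' D') ∩ G.neighborSet a.1).ncard =
      (D' ∩ H.neighborSet (.inl a) ∩ Set.range Sum.inl).ncard := by
  have himage : Subtype.val '' (Sum.inl ⁻¹' D') ∩ G.neighborSet a.1 =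
      Subtype.val '' (Sum.inl ⁻¹' (D' ∩ H.neighborSet (.inl a))) := by
    ext z
    constructor
    · rintro ⟨⟨b, hb, rfl⟩, hab⟩
      exact ⟨b, ⟨hb, (hH a b).2 hab⟩, rfl⟩
    · rintro ⟨b, ⟨hb, hab⟩, rfl⟩
      exact ⟨⟨b, hb, rfl⟩, (hH a b).1 hab⟩
  rw [himage, Set.ncard_image_of_injective _ Subtype.val_injective,
    ← Set.image_preimage_eq_inter_range, Set.ncard_image_of_injective _ Sum.inl_injective]

theorem ncard_image_val_preimage_inl_inter_neighborSet_add_one_le [Finite V] [Finite ι]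
    (hH : ∀ a b : {z // z ≠ v}, H.Adj (.inl a) (.inl b) ↔ G.Adj a.1 b.1)
    {a : {z // z ≠ v}} {i : ι} (hi : .inr i ∈ D' ∩ H.neighborSet (.inl a)) :
    (Subtype.val '' (Sum.inl ⁻¹' D') ∩ G.neighborSet a.1).ncard + 1 ≤
      (D' ∩ H.neighborSet (.inl a)).ncard := by
  have hi' : Sum.inr i ∉ D' ∩ H.neighborSet (.inl a) ∩ Set.range Sum.inl := by simp
  rw [ncard_image_val_preimage_inl_inter_neighborSet hH, ← Set.ncard_insert_of_notMem hi']
  exact Set.ncard_le_ncard (Set.insert_subset hi Set.inter_subset_left)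

theorem Coloring0K.coloring0KOn_image_val_preimage_inl [Finite V] [Finite ι]
    (hH : ∀ a b : {z // z ≠ v}, H.Adj (.inl a) (.inl b) ↔ G.Adj a.1 b.1)
    (hD' : Coloring0K H k D') :
    Coloring0KOn G k {v}ᶜ (Subtype.val '' (Sum.inl ⁻¹' D')) := by
  refine ⟨?_, fun a ha b hb hab => ?_, ?_⟩
  · rintro _ ⟨a, -, rfl⟩
    exact a.2
  · exact (hD'.1 (.inl ⟨a, ha⟩) (.inl ⟨b, hb⟩) ((hH _ _).2 hab)).imp
      (⟨_, ·, rfl⟩) (⟨_, ·, rfl⟩)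
  · rintro _ ⟨a, ha, rfl⟩
    calc (Subtype.val '' (Sum.inl ⁻¹' D') ∩ G.neighborSet a.1).ncard
        = (D' ∩ H.neighborSet (.inl a) ∩ Set.range Sum.inl).ncard :=
          ncard_image_val_preimage_inl_inter_neighborSet hH D' a
      _ ≤ (D' ∩ H.neighborSet (.inl a)).ncard := Set.ncard_le_ncard Set.inter_subset_left
      _ ≤ k := hD'.2 _ ha

/-- `H` is `G - v` together with a path `x p q r y` through new vertices `p q r : ι`. -/
structure IsPathGadget (G : SimpleGraph V) (v x y : V) (H : SimpleGraph ({z // z ≠ v} ⊕ ι))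
    (p q r : ι) : Prop where
  adj_inl_inl : ∀ a b : {z // z ≠ v}, H.Adj (.inl a) (.inl b) ↔ G.Adj a.1 b.1
  adj_inl_inr : ∀ (a : {z // z ≠ v}) (i : ι),
    H.Adj (.inl a) (.inr i) ↔ ((i = p ∧ a.1 = x) ∨ (i = r ∧ a.1 = y))
  adj_inr_inr : ∀ i j : ι, H.Adj (.inr i) (.inr j) ↔
    ((i = p ∧ j = q) ∨ (i = q ∧ j = p) ∨ (i = q ∧ j = r) ∨ (i = r ∧ j = q))

namespace IsPathGadget

variable {p q r : ι}

theorem symm (h : IsPathGadget G v x y H p q r) : IsPathGadget G v y x H r q p where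
  adj_inl_inl := h.adj_inl_inl
  adj_inl_inr a i := (h.adj_inl_inr a i).trans or_comm
  adj_inr_inr i j := (h.adj_inr_inr i j).trans (by tauto)

theorem mem_of_not_colorable [Finite V] [Finite ι] (h : IsPathGadget G v x y H p q r)
    (hk : 1 ≤ k) (hnc : ¬ ∃ D, Coloring0K G k D) (hnv : G.neighborSet v = {x, y})
    (hD' : Coloring0K H k D') (hx : x ∈ Subtype.val '' (Sum.inl ⁻¹' D'))
    (hy : y ∉ Subtype.val '' (Sum.inl ⁻¹' D')) :
    .inr q ∈ D' ∧ .inr r ∈ D' ∧ .inr p ∉ D' := by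
  have hD := hD'.coloring0KOn_image_val_preimage_inl h.adj_inl_inl
  have hsat := hD.le_ncard_of_not_colorable hk hnc hnv hx hy
  obtain ⟨x', hx', rfl⟩ := hx
  have hp : .inr p ∉ D' := fun hp => by
    have hlt := ncard_image_val_preimage_inl_inter_neighborSet_add_one_le h.adj_inl_inl
      ⟨hp, (h.adj_inl_inr x' p).2 (.inl ⟨rfl, rfl⟩)⟩
    have hle : (D' ∩ H.neighborSet (.inl x')).ncard ≤ k := hD'.2 _ hx'
    omega
  have hyv : y ≠ v := (G.ne_of_adj (show y ∈ G.neighborSet v by simp [hnv])).symm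
  have hpq : H.Adj (.inr p) (.inr q) := (h.adj_inr_inr p q).2 (.inl ⟨rfl, rfl⟩)
  have hyr : H.Adj (.inl ⟨y, hyv⟩) (.inr r) := (h.adj_inl_inr _ r).2 (.inr ⟨rfl, rfl⟩)
  exact ⟨(hD'.1 _ _ hpq).resolve_left hp,
    (hD'.1 _ _ hyr).resolve_left fun hy' => hy ⟨_, hy', rfl⟩, hp⟩

theorem coloring0K (h : IsPathGadget G v x y H p q r) (hk : 1 ≤ k) (hpq : p ≠ q) (hpr : p ≠ r)
    (hD : Coloring0KOn G k {v}ᶜ D) (hx : x ∈ D) (hy : y ∉ D) :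
    Coloring0K H k (Sum.inl '' (Subtype.val ⁻¹' D) ∪ Sum.inr '' {q, r}) := by
  set D' := Sum.inl '' (Subtype.val ⁻¹' D) ∪ Sum.inr '' {q, r}
  have hinl (a : {z // z ≠ v}) : .inl a ∈ D' ↔ a.1 ∈ D := by simp [D']
  have hinr (i : ι) : .inr i ∈ D' ↔ i = q ∨ i = r := by simp [D']
  refine ⟨fun c d hcd => ?_, fun c hc => ?_⟩
  · rcases c with a | i <;> rcases d with b | j
    · simpa only [hinl] using hD.2.1 a a.2 b b.2 ((h.adj_inl_inl a b).1 hcd)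
    · rcases (h.adj_inl_inr a j).1 hcd with ⟨-, hax⟩ | ⟨rfl, -⟩
      · exact .inl ((hinl a).2 (hax ▸ hx))
      · exact .inr ((hinr _).2 (.inr rfl))
    · rcases (h.adj_inl_inr b i).1 hcd.symm with ⟨-, hbx⟩ | ⟨rfl, -⟩
      · exact .inr ((hinl b).2 (hbx ▸ hx))
      · exact .inl ((hinr _).2 (.inr rfl))
    · have := (h.adj_inr_inr i j).1 hcd
      simp only [hinr]
      tauto
  · have hinl_adj (a : {z // z ≠ v}) (i : ι) (ha : .inl a ∈ D') (hi : .inr i ∈ D') :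
        ¬ H.Adj (.inl a) (.inr i) := by
      rw [hinl] at ha
      rw [hinr] at hi
      rw [h.adj_inl_inr]
      rintro (⟨rfl, -⟩ | ⟨rfl, rfl⟩)
      exacts [hi.elim hpq hpr, hy ha]
    rcases c with a | i
    · have hsub : D' ∩ H.neighborSet (.inl a) ⊆ Set.range Sum.inl := by
        rintro (b | j) ⟨hj, hadj⟩
        exacts [⟨b, rfl⟩, absurd hadj (hinl_adj a j hc hj)]
      have hrestrict : Subtype.val '' (Sum.inl ⁻¹' D') = D := by
        ext z
        constructor
        · rintro ⟨b, hb, rfl⟩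
          exact (hinl b).1 hb
        · intro hz
          exact ⟨⟨z, hD.1 hz⟩, (hinl _).2 hz, rfl⟩
      show (D' ∩ H.neighborSet (.inl a)).ncard ≤ k
      rw [← Set.inter_eq_left.2 hsub,
        ← ncard_image_val_preimage_inl_inter_neighborSet h.adj_inl_inl, hrestrict]
      exact hD.2.2 _ ((hinl a).1 hc)
    · obtain ⟨j, hj⟩ : ∃ j, D' ∩ H.neighborSet (.inr i) ⊆ {.inr j} := by
        classical
        have hother (j : ι) (hj : .inr j ∈ D') (hadj : H.Adj (.inr i) (.inr j)) :
            j = if i = q then r else q := by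
          rw [hinr] at hc hj
          rw [h.adj_inr_inr] at hadj
          grind
        refine ⟨if i = q then r else q, ?_⟩
        rintro (b | j) ⟨hj, hadj⟩
        exacts [absurd hadj.symm (hinl_adj b i hj hc), congrArg Sum.inr (hother j hj hadj)]
      calc (D' ∩ H.neighborSet (.inr i)).ncard ≤ ({.inr j} : Set _).ncard :=
            Set.ncard_le_ncard hj
        _ ≤ k := by rwa [Set.ncard_singleton]

end IsPathGadget

end Gadget

end

theorem gadget_properties_general {V : Type*} [Fintype V]
    (G : SimpleGraph V) (k : ℕ) (hk : 1 ≤ k)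
    (hnc : ¬ ∃ D : Set V, Coloring0K G k D)
    (v u1 u5 : V) (hnv : G.neighborSet v = {u1, u5})
    (hcol : ∃ D : Set V, Coloring0KOn G k ({v} : Set V)ᶜ D)
    (H' : SimpleGraph ({z : V // z ≠ v} ⊕ Fin 3))
    (hH1 : ∀ a b : {z : V // z ≠ v}, H'.Adj (Sum.inl a) (Sum.inl b) ↔ G.Adj a.1 b.1)
    (hH2 : ∀ (a : {z : V // z ≠ v}) (i : Fin 3),
      H'.Adj (Sum.inl a) (Sum.inr i) ↔ ((i = 0 ∧ a.1 = u1) ∨ (i = 2 ∧ a.1 = u5)))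
    (hH3 : ∀ i j : Fin 3, H'.Adj (Sum.inr i) (Sum.inr j) ↔
      ((i = 0 ∧ j = 1) ∨ (i = 1 ∧ j = 0) ∨ (i = 1 ∧ j = 2) ∨ (i = 2 ∧ j = 1))) :
    (∃ D, Coloring0K H' k D) ∧
      ∀ D, Coloring0K H' k D →
        Sum.inr 1 ∈ D ∧
          ((Sum.inr 0 ∈ D ∧ (Sum.inr 2 : ({z : V // z ≠ v} ⊕ Fin 3)) ∉ D) ∨
            (Sum.inr 2 ∈ D ∧ (Sum.inr 0 : ({z : V // z ≠ v} ⊕ Fin 3)) ∉ D)) := by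
  have hgadget : IsPathGadget G v u1 u5 H' 0 1 2 := ⟨hH1, hH2, hH3⟩
  have hnv' : G.neighborSet v = {u5, u1} := hnv.trans (Set.pair_comm u1 u5)
  refine ⟨?_, fun D hD => ?_⟩
  · obtain ⟨D, hD⟩ := hcol
    rcases hD.xor_mem_of_not_colorable hnc hnv with ⟨h1, h5⟩ | ⟨h5, h1⟩
    · exact ⟨_, hgadget.coloring0K hk (by decide) (by decide) hD h1 h5⟩
    · exact ⟨_, hgadget.symm.coloring0K hk (by decide) (by decide) hD h5 h1⟩
  · rcases (hD.coloring0KOn_image_val_preimage_inl hH1).xor_mem_of_not_colorable hnc hnv with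
      ⟨h1, h5⟩ | ⟨h5, h1⟩
    · obtain ⟨h1D, h2D, h0D⟩ := hgadget.mem_of_not_colorable hk hnc hnv hD h1 h5
      exact ⟨h1D, .inr ⟨h2D, h0D⟩⟩
    · obtain ⟨h1D, h0D, h2D⟩ := hgadget.symm.mem_of_not_colorable hk hnc hnv' hD h5 h1
      exact ⟨h1D, .inl ⟨h0D, h2D⟩⟩

/-- Section 3 gadget claim: `G` is not (0,k)-colorable (`k ≥ 1`), `v` is a
2-vertex of `G` with neighbors `u₁` and `u₅`, and `G - v` is (0,k)-colorable.
`H'` is obtained from `G - v` by adding three new vertices `u₂, u₃, u₄`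
(encoded as `Fin 3` with `0 = u₂`, `1 = u₃`, `2 = u₄`) whose added edges form
exactly the path `u₁ u₂ u₃ u₄ u₅`. Then `H'` is (0,k)-colorable and in every
(0,k)-coloring of `H'`, the vertex `u₃` lies in the k-class and exactly one of
its two neighbors `u₂`, `u₄` lies in the k-class. -/
theorem gadget_properties {V : Type*} [Fintype V] [DecidableEq V]
    (G : SimpleGraph V) [DecidableRel G.Adj] (k : ℕ) (hk : 1 ≤ k)
    (hnc : ¬ ∃ D : Set V, Coloring0K G k D)
    (v u1 u5 : V) (hdv : G.degree v = 2) (hnv : G.neighborSet v = {u1, u5})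
    (hcol : ∃ D : Set V, Coloring0KOn G k ({v} : Set V)ᶜ D)
    (H' : SimpleGraph ({z : V // z ≠ v} ⊕ Fin 3))
    (hH1 : ∀ a b : {z : V // z ≠ v}, H'.Adj (Sum.inl a) (Sum.inl b) ↔ G.Adj a.1 b.1)
    (hH2 : ∀ (a : {z : V // z ≠ v}) (i : Fin 3),
      H'.Adj (Sum.inl a) (Sum.inr i) ↔ ((i = 0 ∧ a.1 = u1) ∨ (i = 2 ∧ a.1 = u5)))
    (hH3 : ∀ i j : Fin 3, H'.Adj (Sum.inr i) (Sum.inr j) ↔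
      ((i = 0 ∧ j = 1) ∨ (i = 1 ∧ j = 0) ∨ (i = 1 ∧ j = 2) ∨ (i = 2 ∧ j = 1))) :
    (∃ D, Coloring0K H' k D) ∧
      ∀ D, Coloring0K H' k D →
        Sum.inr 1 ∈ D ∧
          ((Sum.inr 0 ∈ D ∧ (Sum.inr 2 : ({z : V // z ≠ v} ⊕ Fin 3)) ∉ D) ∨
            (Sum.inr 2 ∈ D ∧ (Sum.inr 0 : ({z : V // z ≠ v} ⊕ Fin 3)) ∉ D)) :=
  gadget_properties_general G k hk hnc v u1 u5 hnv hcol H' hH1 hH2 hH3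
end

section
/- Let k ≥ 3 be an integer. Let Q be a finite simple graph with a distinguished vertex q such that: (i) Q is (0,k)-colorable, and (ii) in every (0,k)-coloring of Q, q lies in the k-class and exactly one neighbor of q lies in the k-class. Let G be a finite simple graph and let G' be the graph obtained from G by adding, for each vertex v of G, k−1 new pairwise vertex-disjoint copies of Q together with an edge joining v to the copy of q in each of these k−1 copies. Then G is (0,1)-colorable if and only if G' is (0,k)-colorable. -/
/-!
In a (0,k)-coloring of `G'` every copy of `Q` carries a (0,k)-coloring of `Q`, so each of the
`k - 1` copies of `q` attached to a vertex `v` lies in the k-class. When `v` is in the k-class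
these are `k - 1` of its at most `k` k-class neighbours, which leaves room for at most one
k-class neighbour in `G`. Conversely, a (0,1)-coloring of `G` together with one fixed
(0,k)-coloring of `Q` in every copy is a (0,k)-coloring of `G'`: a vertex of `G` gains `k - 1`
k-class neighbours, and the copy of `q` gains at most one (its attachment vertex) on top of the
single k-class neighbour it has inside its copy.
-/

open Set

theorem Coloring0K.comap {V V' : Type*} [Finite V'] {G : SimpleGraph V} {G' : SimpleGraph V'}
    {k : ℕ} {D : Set V'} (f : G ↪g G') (hD : Coloring0K G' k D) :
    Coloring0K G k (f ⁻¹' D) := by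
  refine ⟨fun a b hab => hD.1 _ _ (f.map_adj_iff.2 hab), fun a ha => ?_⟩
  have hsub : f '' {b | b ∈ f ⁻¹' D ∧ G.Adj a b} ⊆ {b | b ∈ D ∧ G'.Adj (f a) b} := by
    rintro - ⟨b, ⟨hb, hab⟩, rfl⟩
    exact ⟨hb, f.map_adj_iff.2 hab⟩
  calc {b | b ∈ f ⁻¹' D ∧ G.Adj a b}.ncard
      = (f '' {b | b ∈ f ⁻¹' D ∧ G.Adj a b}).ncard := (ncard_image_of_injective _ f.injective).symm
    _ ≤ {b | b ∈ D ∧ G'.Adj (f a) b}.ncard := ncard_le_ncard hsub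
    _ ≤ k := hD.2 _ ha

section Attach

variable {V ι W : Type*} {G : SimpleGraph V} {Q : SimpleGraph W} {q : W}
  {G' : SimpleGraph (V ⊕ V × ι × W)}

theorem ncard_inl_neighbors_attach [Finite V] [Finite ι]
    (h1 : ∀ a b : V, G'.Adj (Sum.inl a) (Sum.inl b) ↔ G.Adj a b)
    (h2 : ∀ (a : V) (p : V × ι × W), G'.Adj (Sum.inl a) (Sum.inr p) ↔ (p.1 = a ∧ p.2.2 = q))
    (D' : Set (V ⊕ V × ι × W)) (v : V) :
    {b | b ∈ D' ∧ G'.Adj (Sum.inl v) b}.ncard =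
      {u | Sum.inl u ∈ D' ∧ G.Adj v u}.ncard + {i : ι | Sum.inr (v, i, q) ∈ D'}.ncard := by
  have hinj : Function.Injective fun i : ι => (Sum.inr (v, i, q) : V ⊕ V × ι × W) := by
    intro i j hij
    simpa using hij
  have hsplit : {b | b ∈ D' ∧ G'.Adj (Sum.inl v) b} =
      Sum.inl '' {u | Sum.inl u ∈ D' ∧ G.Adj v u} ∪
        (fun i : ι => (Sum.inr (v, i, q) : V ⊕ V × ι × W)) '' {i | Sum.inr (v, i, q) ∈ D'} := by
    ext (u | ⟨w, i, x⟩)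
    · simp [h1]
    · simp only [mem_ofPred_eq, h2]
      aesop
  have hdisj : Disjoint (Sum.inl '' {u | Sum.inl u ∈ D' ∧ G.Adj v u})
      ((fun i : ι => (Sum.inr (v, i, q) : V ⊕ V × ι × W)) '' {i | Sum.inr (v, i, q) ∈ D'}) := by
    rw [disjoint_left]
    rintro - ⟨u, -, rfl⟩ ⟨i, -, h⟩
    simp at h
  rw [hsplit, ncard_union_eq hdisj, ncard_image_of_injective _ Sum.inl_injective,
    ncard_image_of_injective _ hinj]

theorem ncard_inr_neighbors_attach_le [Finite W] [DecidableEq W]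
    (h2 : ∀ (a : V) (p : V × ι × W), G'.Adj (Sum.inl a) (Sum.inr p) ↔ (p.1 = a ∧ p.2.2 = q))
    (h3 : ∀ p p' : V × ι × W, G'.Adj (Sum.inr p) (Sum.inr p') ↔
      (p.1 = p'.1 ∧ p.2.1 = p'.2.1 ∧ Q.Adj p.2.2 p'.2.2))
    (D' : Set (V ⊕ V × ι × W)) (v : V) (i : ι) (w : W) :
    {b | b ∈ D' ∧ G'.Adj (Sum.inr (v, i, w)) b}.ncard ≤
      {x | Sum.inr (v, i, x) ∈ D' ∧ Q.Adj w x}.ncard + if w = q then 1 else 0 := by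
  set copy : W → V ⊕ V × ι × W := fun x => Sum.inr (v, i, x)
  have hinj : Function.Injective copy := by
    intro x y hxy
    simpa [copy] using hxy
  have hsub : {b | b ∈ D' ∧ G'.Adj (Sum.inr (v, i, w)) b} ⊆
      insert (Sum.inl v) (copy '' {x | Sum.inr (v, i, x) ∈ D' ∧ Q.Adj w x}) := by
    rintro (u | ⟨u, j, x⟩) ⟨hmem, hadj⟩
    · obtain ⟨rfl, -⟩ := (h2 u _).1 hadj.symm
      exact mem_insert _ _
    · obtain ⟨rfl, rfl, hQ⟩ := (h3 _ _).1 hadj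
      exact Or.inr ⟨x, ⟨hmem, hQ⟩, rfl⟩
  split_ifs with hw
  · calc _ ≤ _ := ncard_le_ncard hsub
      _ ≤ _ := ncard_insert_le _ _
      _ = _ := by rw [ncard_image_of_injective _ hinj]
  · have hv : Sum.inl v ∉ {b | b ∈ D' ∧ G'.Adj (Sum.inr (v, i, w)) b} :=
      fun ⟨_, hadj⟩ => hw ((h2 v _).1 hadj.symm).2
    calc _ ≤ _ := ncard_le_ncard ((subset_insert_iff_of_notMem hv).1 hsub)
      _ = _ := by rw [ncard_image_of_injective _ hinj, add_zero]

theorem coloring0K_copy [Finite V] [Finite ι] [Finite W] {k : ℕ}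
    (h3 : ∀ p p' : V × ι × W, G'.Adj (Sum.inr p) (Sum.inr p') ↔
      (p.1 = p'.1 ∧ p.2.1 = p'.2.1 ∧ Q.Adj p.2.2 p'.2.2))
    {D' : Set (V ⊕ V × ι × W)} (hD' : Coloring0K G' k D') (v : V) (i : ι) :
    Coloring0K Q k {x | Sum.inr (v, i, x) ∈ D'} :=
  hD'.comap ⟨⟨fun x => Sum.inr (v, i, x), by intro x y hxy; simpa using hxy⟩,
    (h3 _ _).trans (by simp)⟩

theorem coloring0K_attach [Finite V] [Finite ι] [Finite W] {k : ℕ}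
    (hι : Nat.card ι + 1 ≤ k) (hk : 2 ≤ k)
    (h1 : ∀ a b : V, G'.Adj (Sum.inl a) (Sum.inl b) ↔ G.Adj a b)
    (h2 : ∀ (a : V) (p : V × ι × W), G'.Adj (Sum.inl a) (Sum.inr p) ↔ (p.1 = a ∧ p.2.2 = q))
    (h3 : ∀ p p' : V × ι × W, G'.Adj (Sum.inr p) (Sum.inr p') ↔
      (p.1 = p'.1 ∧ p.2.1 = p'.2.1 ∧ Q.Adj p.2.2 p'.2.2))
    {D : Set V} (hD : Coloring0K G 1 D) {DQ : Set W} (hDQ : Coloring0K Q k DQ)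
    (hq : q ∈ DQ) (hq1 : {x | x ∈ DQ ∧ Q.Adj q x}.ncard = 1) :
    Coloring0K G' k {x | Sum.elim (· ∈ D) (fun p => p.2.2 ∈ DQ) x} := by
  classical
  constructor
  · rintro (a | ⟨a, i, x⟩) (b | ⟨b, j, y⟩) hadj
    · exact hD.1 a b ((h1 a b).1 hadj)
    · obtain ⟨-, rfl⟩ := (h2 a _).1 hadj
      exact Or.inr hq
    · obtain ⟨-, rfl⟩ := (h2 b _).1 hadj.symm
      exact Or.inl hq
    · exact hDQ.1 x y ((h3 _ _).1 hadj).2.2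
  · rintro (v | ⟨v, i, w⟩) hx
    · have hcopies : {i : ι | Sum.inr (v, i, q) ∈
          {x | Sum.elim (· ∈ D) (fun p => p.2.2 ∈ DQ) x}} = univ :=
        eq_univ_of_forall fun _ => hq
      rw [ncard_inl_neighbors_attach h1 h2, hcopies, ncard_univ]
      have := hD.2 v hx
      simp only [mem_ofPred_eq, Sum.elim_inl] at this ⊢
      omega
    · refine (ncard_inr_neighbors_attach_le h2 h3 _ v i w).trans ?_
      simp only [mem_ofPred_eq, Sum.elim_inr]
      split_ifs with hw
      · subst hw
        omega
      · exact hDQ.2 w hx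

theorem coloring0K_one_of_attach [Finite V] [Finite ι] [Finite W] {k : ℕ}
    (hι : k ≤ Nat.card ι + 1)
    (hforce : ∀ D : Set W, Coloring0K Q k D → q ∈ D)
    (h1 : ∀ a b : V, G'.Adj (Sum.inl a) (Sum.inl b) ↔ G.Adj a b)
    (h2 : ∀ (a : V) (p : V × ι × W), G'.Adj (Sum.inl a) (Sum.inr p) ↔ (p.1 = a ∧ p.2.2 = q))
    (h3 : ∀ p p' : V × ι × W, G'.Adj (Sum.inr p) (Sum.inr p') ↔
      (p.1 = p'.1 ∧ p.2.1 = p'.2.1 ∧ Q.Adj p.2.2 p'.2.2))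
    {D' : Set (V ⊕ V × ι × W)} (hD' : Coloring0K G' k D') :
    Coloring0K G 1 {v | Sum.inl v ∈ D'} := by
  refine ⟨fun a b hab => hD'.1 _ _ ((h1 a b).2 hab), fun v hv => ?_⟩
  have hcopies : {i : ι | Sum.inr (v, i, q) ∈ D'} = univ :=
    eq_univ_of_forall fun i => hforce _ (coloring0K_copy h3 hD' v i)
  have hdeg := hD'.2 _ hv
  rw [ncard_inl_neighbors_attach h1 h2, hcopies, ncard_univ] at hdeg
  simp only [mem_ofPred_eq]
  omega

end Attach

theorem reduction_correct_general {V W : Type*} [Fintype V] [Fintype W]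
    (k : ℕ) (hk : 3 ≤ k)
    (Q : SimpleGraph W) (q : W)
    (hQcol : ∃ D : Set W, Coloring0K Q k D)
    (hQforce : ∀ D : Set W, Coloring0K Q k D →
      q ∈ D ∧ {x | x ∈ D ∧ Q.Adj q x}.ncard = 1)
    (G : SimpleGraph V)
    (G' : SimpleGraph (V ⊕ (V × Fin (k - 1) × W)))
    (h1 : ∀ a b : V, G'.Adj (Sum.inl a) (Sum.inl b) ↔ G.Adj a b)
    (h2 : ∀ (a : V) (p : V × Fin (k - 1) × W),
      G'.Adj (Sum.inl a) (Sum.inr p) ↔ (p.1 = a ∧ p.2.2 = q))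
    (h3 : ∀ p p' : V × Fin (k - 1) × W,
      G'.Adj (Sum.inr p) (Sum.inr p') ↔
        (p.1 = p'.1 ∧ p.2.1 = p'.2.1 ∧ Q.Adj p.2.2 p'.2.2)) :
    (∃ D : Set V, Coloring0K G 1 D) ↔
      (∃ D : Set (V ⊕ (V × Fin (k - 1) × W)), Coloring0K G' k D) := by
  have hcard : Nat.card (Fin (k - 1)) = k - 1 := Nat.card_fin _
  constructor
  · rintro ⟨D, hD⟩
    obtain ⟨DQ, hDQ⟩ := hQcol
    obtain ⟨hq, hq1⟩ := hQforce DQ hDQ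
    exact ⟨_, coloring0K_attach (by omega) (by omega) h1 h2 h3 hD hDQ hq hq1⟩
  · rintro ⟨D', hD'⟩
    exact ⟨_, coloring0K_one_of_attach (by omega) (fun D hD => (hQforce D hD).1) h1 h2 h3 hD'⟩

/-- Correctness of the reduction in Theorem 2: `Q` is a gadget graph with a
distinguished vertex `q` such that `Q` is (0,k)-colorable (`k ≥ 3`) and in every
(0,k)-coloring of `Q`, `q` lies in the k-class and exactly one neighbor of `q`
lies in the k-class. `G'` is obtained from `G` by attaching, to each vertex `v`
of `G`, `k-1` new pairwise disjoint copies of `Q` (indexed by `Fin (k-1)`, with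
vertex set `V × Fin (k-1) × W`), joining `v` to the copy of `q` in each of them.
Then `G` is (0,1)-colorable iff `G'` is (0,k)-colorable. -/
theorem reduction_correct {V W : Type*} [Fintype V] [DecidableEq V] [Fintype W]
    (k : ℕ) (hk : 3 ≤ k)
    (Q : SimpleGraph W) (q : W)
    (hQcol : ∃ D : Set W, Coloring0K Q k D)
    (hQforce : ∀ D : Set W, Coloring0K Q k D →
      q ∈ D ∧ {x | x ∈ D ∧ Q.Adj q x}.ncard = 1)
    (G : SimpleGraph V)
    (G' : SimpleGraph (V ⊕ (V × Fin (k - 1) × W)))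
    (h1 : ∀ a b : V, G'.Adj (Sum.inl a) (Sum.inl b) ↔ G.Adj a b)
    (h2 : ∀ (a : V) (p : V × Fin (k - 1) × W),
      G'.Adj (Sum.inl a) (Sum.inr p) ↔ (p.1 = a ∧ p.2.2 = q))
    (h3 : ∀ p p' : V × Fin (k - 1) × W,
      G'.Adj (Sum.inr p) (Sum.inr p') ↔
        (p.1 = p'.1 ∧ p.2.1 = p'.2.1 ∧ Q.Adj p.2.2 p'.2.2)) :
    (∃ D : Set V, Coloring0K G 1 D) ↔
      (∃ D : Set (V ⊕ (V × Fin (k - 1) × W)), Coloring0K G' k D) :=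
  reduction_correct_general k hk Q q hQcol hQforce G G' h1 h2 h3
end
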